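/- Let G be a compact Lie group acting on a finite-dimensional real inner product space V by an orthogonal representation ρ : G → O(V), with principal isotropy subgroup H, H-fixed subspace V^H, and N the normalizer of H in G. For p ∈ V^H, define ν_p as the orthogonal complement in V of {dρ(X)p : X ∈ Lie(G)} and σ_p = {v ∈ V^H : ⟨v, dρ(Y)p⟩ = 0 for all Y ∈ Lie(N)}. Then σ_p = ν_p ∩ V^H; equivalently, a vector v ∈ V^H is orthogonal to the tangent space of the N-orbit Np at p if and only if it is orthogonal to the tangent space of the G-orbit Gp at p. -/

import Mathlib

/-- The subspace of `V` left pointwise fixed by the subgroup `H` acting through `ρ`. -/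
def fixedSet {V : Type*} [NormedAddCommGroup V] [InnerProductSpace ℝ V]
    {G : Type*} [Group G] (ρ : G →* (V ≃ₗᵢ[ℝ] V)) (H : Subgroup G) : Set V :=
  {v : V | ∀ h ∈ H, ρ h v = v}

/-- `H` is a principal isotropy subgroup for the orthogonal representation `ρ`. -/
def IsPrincipalIsotropy {V : Type*} [NormedAddCommGroup V] [InnerProductSpace ℝ V]
    {G : Type*} [Group G] (ρ : G →* (V ≃ₗᵢ[ℝ] V)) (H : Subgroup G) : Prop :=
  (∃ p₀ : V, ∀ g : G, g ∈ H ↔ ρ g p₀ = p₀) ∧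
    ∀ p : V, ∃ g : G, ∀ h ∈ H, ρ (g * h * g⁻¹) p = p

/-- The Lie algebra of (the image under `ρ` of) the subgroup `S ≤ G`, realized as the set of
endomorphisms `A` of `V` whose one-parameter group `t ↦ exp(tA)` lies in `ρ(S)`.
For `S = ⊤` this is `dρ(Lie(G))`; for `S = N_G(H)` it is `dρ(Lie(N))`. -/
def lieOf {V : Type*} [NormedAddCommGroup V] [InnerProductSpace ℝ V]
    {G : Type*} [Group G] (ρ : G →* (V ≃ₗᵢ[ℝ] V)) (S : Subgroup G) : Set (V →L[ℝ] V) :=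
  {A : V →L[ℝ] V | ∀ t : ℝ, ∃ g ∈ S, ∀ v : V, ρ g v = NormedSpace.exp (t • A) v}

/-- The normal space `ν_p` to the orbit `Gp` at `p`: the orthogonal complement of the
tangent space `{dρ(X)p : X ∈ Lie(G)}`. -/
def nuSet {V : Type*} [NormedAddCommGroup V] [InnerProductSpace ℝ V]
    {G : Type*} [Group G] (ρ : G →* (V ≃ₗᵢ[ℝ] V)) (p : V) : Set V :=
  {v : V | ∀ A ∈ lieOf ρ (⊤ : Subgroup G), (inner ℝ v (A p) : ℝ) = 0}

/-!
Average a tangent direction `A ∈ dρ(Lie G)` over the compact group `H` with respect to Haar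
measure: the average `B = ∫ ρ(h) A ρ(h)⁻¹ dh` commutes with `ρ(H)`, and since `p` and `v` are
`H`-fixed, `⟪v, B p⟫ = ⟪v, A p⟫`. The Lie algebra `{X | ∀ t, exp (t X) ∈ ρ(G)}` of the compact
group `ρ(G)` is a closed linear subspace (the Lie product formula gives closure under addition),
so `B` lies in it. Then each `exp (t B) = ρ(g)` commutes with `ρ(H)`, hence `g` normalizes the
isotropy group `H = G_{p₀}`, i.e. `B ∈ dρ(Lie N)`.
-/

open NormedSpace Filter Topology MeasureTheory Subgroup
open scoped InnerProductSpace

theorem norm_pow_sub_pow_le {𝔸 : Type*} [NormedRing 𝔸] [NormOneClass 𝔸] {x y : 𝔸} {M : ℝ}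
    (hM : 1 ≤ M) (hx : ‖x‖ ≤ M) (hy : ‖y‖ ≤ M) (n : ℕ) : ‖x ^ n - y ^ n‖ ≤ n * M ^ n * ‖x - y‖ := by
  induction n with
  | zero => simp
  | succ n ih =>
    have hxn : ‖x ^ n‖ ≤ M ^ n := (norm_pow_le x n).trans (by gcongr)
    calc ‖x ^ (n + 1) - y ^ (n + 1)‖ = ‖x ^ n * (x - y) + (x ^ n - y ^ n) * y‖ := by
          congr 1; noncomm_ring
      _ ≤ ‖x ^ n‖ * ‖x - y‖ + ‖x ^ n - y ^ n‖ * ‖y‖ :=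
          (norm_add_le _ _).trans (add_le_add (norm_mul_le _ _) (norm_mul_le _ _))
      _ ≤ M ^ n * ‖x - y‖ + n * M ^ n * ‖x - y‖ * M := by gcongr
      _ ≤ M ^ n * M * ‖x - y‖ + n * M ^ n * ‖x - y‖ * M := by
          gcongr; exact le_mul_of_one_le_right (pow_nonneg (zero_le_one.trans hM) n) hM
      _ = (n + 1 : ℕ) * M ^ (n + 1) * ‖x - y‖ := by push_cast; ring

namespace NormedSpace

variable {𝔸 : Type*} [NormedRing 𝔸] [NormedAlgebra ℝ 𝔸] [CompleteSpace 𝔸] [NormOneClass 𝔸]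

theorem norm_exp_sub_sum_range_le (Z : 𝔸) (m : ℕ) :
    ‖exp Z - ∑ i ∈ Finset.range m, (i.factorial : ℝ)⁻¹ • Z ^ i‖ ≤ ‖Z‖ ^ m * Real.exp ‖Z‖ := by
  have hsum := (expSeries_summable' (𝕂 := ℝ) Z).sum_add_tsum_nat_add m
  have htail : exp Z - ∑ i ∈ Finset.range m, (i.factorial : ℝ)⁻¹ • Z ^ i
      = ∑' i, ((i + m).factorial : ℝ)⁻¹ • Z ^ (i + m) := by
    rw [exp_eq_tsum ℝ]
    dsimp only
    rw [← hsum, add_sub_cancel_left]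
  have hterm (i : ℕ) : ‖((i + m).factorial : ℝ)⁻¹ • Z ^ (i + m)‖
      ≤ ‖Z‖ ^ m * (‖Z‖ ^ i / i.factorial) := by
    rw [norm_smul, norm_inv, Real.norm_natCast, mul_div, div_eq_inv_mul, ← pow_add, add_comm m]
    gcongr
    exacts [Nat.le_add_right i m, norm_pow_le Z _]
  rw [htail, Real.exp_eq_exp_ℝ, exp_eq_tsum_div, ← tsum_mul_left]
  exact tsum_of_norm_bounded ((Real.summable_pow_div_factorial _).mul_left _).hasSum hterm

theorem norm_exp_le (Z : 𝔸) : ‖exp Z‖ ≤ Real.exp ‖Z‖ := by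
  simpa using norm_exp_sub_sum_range_le Z 0

theorem norm_exp_sub_one_le (Z : 𝔸) : ‖exp Z - 1‖ ≤ ‖Z‖ * Real.exp ‖Z‖ := by
  simpa using norm_exp_sub_sum_range_le Z 1

theorem norm_exp_sub_one_sub_le (Z : 𝔸) : ‖exp Z - 1 - Z‖ ≤ ‖Z‖ ^ 2 * Real.exp ‖Z‖ := by
  simpa [Finset.sum_range_succ, sub_sub] using norm_exp_sub_sum_range_le Z 2

theorem norm_exp_mul_exp_sub_exp_add_le (X Y : 𝔸) :
    ‖exp X * exp Y - exp (X + Y)‖ ≤ 4 * (‖X‖ + ‖Y‖) ^ 2 * Real.exp (‖X‖ + ‖Y‖) := by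
  set s := ‖X‖ + ‖Y‖
  have hX : ‖X‖ ≤ s := le_add_of_nonneg_right (norm_nonneg Y)
  have hY : ‖Y‖ ≤ s := le_add_of_nonneg_left (norm_nonneg X)
  have hXY : ‖X + Y‖ ≤ s := norm_add_le X Y
  -- every summand is a second-order remainder
  have hsplit : exp X * exp Y - exp (X + Y) = (exp X - 1 - X) * exp Y + X * (exp Y - 1)
      + (exp Y - 1 - Y) - (exp (X + Y) - 1 - (X + Y)) := by
    noncomm_ring
  have h₁ : ‖(exp X - 1 - X) * exp Y‖ ≤ s ^ 2 * Real.exp s := calc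
    _ ≤ ‖X‖ ^ 2 * Real.exp ‖X‖ * Real.exp ‖Y‖ :=
      (norm_mul_le _ _).trans (by gcongr; exacts [norm_exp_sub_one_sub_le X, norm_exp_le Y])
    _ ≤ s ^ 2 * Real.exp s := by rw [mul_assoc, ← Real.exp_add]; gcongr
  have h₂ : ‖X * (exp Y - 1)‖ ≤ s ^ 2 * Real.exp s := calc
    _ ≤ ‖X‖ * (‖Y‖ * Real.exp ‖Y‖) :=
      (norm_mul_le _ _).trans (by gcongr; exact norm_exp_sub_one_le Y)
    _ ≤ s * (s * Real.exp s) := by gcongr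
    _ = s ^ 2 * Real.exp s := by ring
  have h₃ : ‖exp Y - 1 - Y‖ ≤ s ^ 2 * Real.exp s :=
    (norm_exp_sub_one_sub_le Y).trans (by gcongr)
  have h₄ : ‖exp (X + Y) - 1 - (X + Y)‖ ≤ s ^ 2 * Real.exp s :=
    (norm_exp_sub_one_sub_le _).trans (by gcongr)
  calc ‖exp X * exp Y - exp (X + Y)‖
      ≤ ‖(exp X - 1 - X) * exp Y‖ + ‖X * (exp Y - 1)‖ + ‖exp Y - 1 - Y‖
        + ‖exp (X + Y) - 1 - (X + Y)‖ := by
        rw [hsplit]; exact (norm_sub_le _ _).trans (by gcongr; exact norm_add₃_le)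
    _ ≤ 4 * s ^ 2 * Real.exp s := by linarith

theorem tendsto_exp_mul_exp_pow (X Y : 𝔸) :
    Tendsto (fun n : ℕ => (exp ((n : ℝ)⁻¹ • X) * exp ((n : ℝ)⁻¹ • Y)) ^ n)
      atTop (𝓝 (exp (X + Y))) := by
  set s := ‖X‖ + ‖Y‖
  rw [tendsto_iff_norm_sub_tendsto_zero]
  set C := 4 * s ^ 2 * Real.exp (2 * s)
  refine squeeze_zero' (g := fun n : ℕ => C * (n : ℝ)⁻¹) (.of_forall fun n => norm_nonneg _) ?_
    (by simpa using (tendsto_inv_atTop_nhds_zero_nat (𝕜 := ℝ)).const_mul C)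
  filter_upwards [eventually_ge_atTop 1] with n hn
  set c : ℝ := (n : ℝ)⁻¹
  have hc : 0 ≤ c := by positivity
  have hnc : (n : ℝ) * c = 1 := mul_inv_cancel₀ (by positivity)
  have hcs : ‖c • X‖ + ‖c • Y‖ = c * s := by
    simp only [norm_smul, Real.norm_of_nonneg hc]; ring
  have hexp_pow : exp (c • X + c • Y) ^ n = exp (X + Y) := by
    let : NormedAlgebra ℚ 𝔸 := .restrictScalars ℚ ℝ 𝔸
    rw [← smul_add, ← exp_nsmul, ← Nat.cast_smul_eq_nsmul ℝ, smul_smul, hnc, one_smul]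
  have hM : 1 ≤ Real.exp (c * s) := Real.one_le_exp (by positivity)
  have hprod : ‖exp (c • X) * exp (c • Y)‖ ≤ Real.exp (c * s) := by
    rw [← hcs, Real.exp_add]
    exact (norm_mul_le _ _).trans (by gcongr <;> exact norm_exp_le _)
  have hsum : ‖exp (c • X + c • Y)‖ ≤ Real.exp (c * s) :=
    (norm_exp_le _).trans (Real.exp_le_exp.2 (hcs ▸ norm_add_le _ _))
  have hMn : Real.exp (c * s) ^ n = Real.exp s := by
    rw [← Real.exp_nat_mul, ← mul_assoc, hnc, one_mul]
  have hcs_le : c * s ≤ s :=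
    mul_le_of_le_one_left (by positivity) (inv_le_one_of_one_le₀ (by exact_mod_cast hn))
  calc ‖(exp (c • X) * exp (c • Y)) ^ n - exp (X + Y)‖
      ≤ n * Real.exp s * (4 * (c * s) ^ 2 * Real.exp (c * s)) := by
        rw [← hexp_pow, ← hMn]
        refine (norm_pow_sub_pow_le hM hprod hsum n).trans ?_
        rw [← hcs]; gcongr; exact norm_exp_mul_exp_sub_exp_add_le _ _
    _ ≤ n * Real.exp s * (4 * (c * s) ^ 2 * Real.exp s) := by gcongr
    _ = C * c := by
        simp only [C, two_mul, Real.exp_add]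
        linear_combination (4 * s ^ 2 * Real.exp s * Real.exp s * c) * hnc

end NormedSpace

namespace Submonoid

variable {𝔸 : Type*} [NormedRing 𝔸] [NormedAlgebra ℝ 𝔸] {M : Submonoid 𝔸}

/-- For a closed subgroup `M` of operators this is the Lie algebra of `M`. -/
def expLie (M : Submonoid 𝔸) : Set 𝔸 := {X | ∀ t : ℝ, exp (t • X) ∈ M}

theorem smul_mem_expLie {X : 𝔸} (hX : X ∈ M.expLie) (c : ℝ) : c • X ∈ M.expLie :=
  fun t => by rw [smul_smul]; exact hX (t * c)

variable [CompleteSpace 𝔸]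

theorem units_conj_mem_expLie (u : 𝔸ˣ) (hu : (u : 𝔸) ∈ M) (hu' : ((u⁻¹ : 𝔸ˣ) : 𝔸) ∈ M)
    {X : 𝔸} (hX : X ∈ M.expLie) : u * X * ↑u⁻¹ ∈ M.expLie := fun t => by
  let : NormedAlgebra ℚ 𝔸 := .restrictScalars ℚ ℝ 𝔸
  rw [← smul_mul_assoc, ← mul_smul_comm, exp_units_conj]
  exact mul_mem (mul_mem hu (hX t)) hu'

theorem add_mem_expLie [NormOneClass 𝔸] (hM : IsClosed (M : Set 𝔸)) {X Y : 𝔸}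
    (hX : X ∈ M.expLie) (hY : Y ∈ M.expLie) : X + Y ∈ M.expLie := fun t => by
  rw [smul_add]
  exact hM.mem_of_tendsto (tendsto_exp_mul_exp_pow (t • X) (t • Y)) (.of_forall fun n =>
    pow_mem (mul_mem (smul_mem_expLie hX t _) (smul_mem_expLie hY t _)) n)

theorem convex_expLie [NormOneClass 𝔸] (hM : IsClosed (M : Set 𝔸)) : Convex ℝ M.expLie :=
  fun _ hX _ hY a b _ _ _ => add_mem_expLie hM (smul_mem_expLie hX a) (smul_mem_expLie hY b)

theorem isClosed_expLie (hM : IsClosed (M : Set 𝔸)) : IsClosed M.expLie := by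
  let : NormedAlgebra ℚ 𝔸 := .restrictScalars ℚ ℝ 𝔸
  simp only [expLie, Set.ofPred_forall]
  exact isClosed_iInter fun t => hM.preimage (exp_continuous.comp (continuous_const_smul t))

end Submonoid

noncomputable def conjAverage {𝔸 : Type*} [NormedRing 𝔸] [NormedAlgebra ℝ 𝔸]
    {K : Type*} [Group K] [MeasurableSpace K] (μ : Measure K) (ψ : K →* 𝔸) (X : 𝔸) : 𝔸 :=
  ∫ k, ψ k * X * ψ k⁻¹ ∂μ

section ConjAverage

variable {𝔸 : Type*} [NormedRing 𝔸]
  {K : Type*} [Group K] [TopologicalSpace K] [IsTopologicalGroup K] [CompactSpace K]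
  [MeasurableSpace K] [BorelSpace K] {ψ : K →* 𝔸}

theorem integrable_conj (μ : Measure K) [IsFiniteMeasure μ] (hψ : Continuous ψ) (X : 𝔸) :
    Integrable (fun k => ψ k * X * ψ k⁻¹) μ :=
  ((hψ.mul continuous_const).mul (hψ.comp continuous_inv)).integrable_of_hasCompactSupport
    (.of_compactSpace _)

variable [NormedAlgebra ℝ 𝔸]

theorem commute_conjAverage (μ : Measure K) [IsFiniteMeasure μ] [μ.IsMulLeftInvariant]
    (hψ : Continuous ψ) (X : 𝔸) (k : K) : Commute (ψ k) (conjAverage μ ψ X) := by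
  have hconj (k' : K) : ψ k * (ψ k' * X * ψ k'⁻¹) = ψ (k * k') * X * ψ (k * k')⁻¹ * ψ k := by
    simp only [mul_inv_rev, map_mul, mul_assoc]
    rw [← map_mul ψ k⁻¹ k, inv_mul_cancel, map_one, mul_one]
  unfold Commute SemiconjBy conjAverage
  rw [← integral_const_mul_of_integrable (integrable_conj μ hψ X),
    ← integral_mul_const_of_integrable (integrable_conj μ hψ X), funext hconj,
    integral_mul_left_eq_self (fun k' => ψ k' * X * ψ k'⁻¹ * ψ k) k]

theorem conjAverage_mem [CompleteSpace 𝔸] (μ : Measure K) [IsProbabilityMeasure μ]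
    (hψ : Continuous ψ) {X : 𝔸} {S : Set 𝔸} (hS : Convex ℝ S) (hSc : IsClosed S)
    (hXS : ∀ k, ψ k * X * ψ k⁻¹ ∈ S) : conjAverage μ ψ X ∈ S :=
  hS.integral_mem hSc (.of_forall hXS) (integrable_conj μ hψ X)

theorem map_conjAverage [CompleteSpace 𝔸] (μ : Measure K) [IsProbabilityMeasure μ]
    (hψ : Continuous ψ) {X : 𝔸} {F : Type*} [NormedAddCommGroup F] [NormedSpace ℝ F]
    [CompleteSpace F] (ℓ : 𝔸 →L[ℝ] F) (hℓ : ∀ k, ℓ (ψ k * X * ψ k⁻¹) = ℓ X) :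
    ℓ (conjAverage μ ψ X) = ℓ X := by
  rw [conjAverage, ← ℓ.integral_comp_comm (integrable_conj μ hψ X)]
  simp [hℓ]

end ConjAverage

theorem Subgroup.mem_normalizer_of_forall_commute {G E : Type*} [Group G] [Group E]
    {H : Subgroup G} (f : G →* E) (hH : ∀ g₁ g₂, f g₁ = f g₂ → g₁ ∈ H → g₂ ∈ H) {g : G}
    (hg : ∀ h ∈ H, Commute (f g) (f h)) : g ∈ normalizer (H : Set G) := by
  refine mem_normalizer_iff.2 fun h => ⟨fun hh => hH h _ ?_ hh, fun hh => hH _ h ?_ hh⟩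
  · rw [map_mul, map_mul, map_inv, (hg h hh).eq, mul_inv_cancel_right]
  · calc f (g * h * g⁻¹) = f g⁻¹ * f (g * h * g⁻¹) * f g := by
          rw [map_inv, mul_assoc (f g)⁻¹, ← (hg _ hh).eq, inv_mul_cancel_left]
      _ = f h := by rw [← map_mul, ← map_mul]; congr 1; group

section Representation

variable {V : Type*} [NormedAddCommGroup V] [InnerProductSpace ℝ V]
  {G : Type*} [Group G] (ρ : G →* (V ≃ₗᵢ[ℝ] V))

def operatorRep : G →* (V →L[ℝ] V) where
  toFun g := (ρ g).toContinuousLinearEquiv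
  map_one' := by ext; simp
  map_mul' g h := by ext; simp

@[simp]
theorem operatorRep_apply (g : G) (v : V) : operatorRep ρ g v = ρ g v := rfl

theorem mem_lieOf_iff {S : Subgroup G} {A : V →L[ℝ] V} :
    A ∈ lieOf ρ S ↔ ∀ t : ℝ, ∃ g ∈ S, operatorRep ρ g = exp (t • A) := by
  simp only [ContinuousLinearMap.ext_iff, operatorRep_apply]
  rfl

theorem lieOf_mono {S T : Subgroup G} (hST : S ≤ T) : lieOf ρ S ⊆ lieOf ρ T :=
  fun _ hA t => let ⟨g, hg, h⟩ := hA t; ⟨g, hST hg, h⟩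

theorem lieOf_top_eq_expLie : lieOf ρ ⊤ = (MonoidHom.mrange (operatorRep ρ)).expLie := by
  ext A
  simp [mem_lieOf_iff, Submonoid.expLie, eq_comm]

theorem mem_lieOf_normalizer_of_commute {H : Subgroup G} {p₀ : V}
    (hp₀ : ∀ g : G, g ∈ H ↔ ρ g p₀ = p₀) {B : V →L[ℝ] V} (hB : B ∈ lieOf ρ ⊤)
    (hBH : ∀ h ∈ H, Commute (operatorRep ρ h) B) : B ∈ lieOf ρ (normalizer (H : Set G)) := by
  rw [mem_lieOf_iff] at hB ⊢
  intro t
  obtain ⟨g, -, hg⟩ := hB t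
  refine ⟨g, Subgroup.mem_normalizer_of_forall_commute ρ ?_ fun h hh => ?_, hg⟩
  · intro g₁ g₂ h₁₂ hg₁
    rwa [hp₀, ← h₁₂, ← hp₀]
  · have hcomm : Commute (operatorRep ρ g) (operatorRep ρ h) :=
      hg ▸ (((hBH h hh).symm.smul_left t).exp_left)
    ext v
    simpa using congr($hcomm.eq v)

variable [TopologicalSpace G]

theorem continuous_operatorRep [FiniteDimensional ℝ V]
    (hρ : Continuous fun gv : G × V => ρ gv.1 gv.2) : Continuous (operatorRep ρ) :=
  continuous_clm_apply.2 fun _ => hρ.comp (continuous_id.prodMk continuous_const)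

theorem isClosed_mrange_operatorRep [FiniteDimensional ℝ V] [CompactSpace G]
    (hρ : Continuous fun gv : G × V => ρ gv.1 gv.2) :
    IsClosed (MonoidHom.mrange (operatorRep ρ) : Set (V →L[ℝ] V)) := by
  rw [MonoidHom.coe_mrange]
  exact (isCompact_range (continuous_operatorRep ρ hρ)).isClosed

theorem isClosed_stabilizer (hρ : Continuous fun gv : G × V => ρ gv.1 gv.2) (p₀ : V) :
    IsClosed {g : G | ρ g p₀ = p₀} :=
  isClosed_singleton.preimage (hρ.comp (continuous_id.prodMk continuous_const))

end Representation

theorem exists_mem_lieOf_normalizer_inner_eq {V : Type*} [NormedAddCommGroup V]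
    [InnerProductSpace ℝ V] [FiniteDimensional ℝ V] {G : Type*} [Group G] [TopologicalSpace G]
    [IsTopologicalGroup G] [CompactSpace G] (ρ : G →* (V ≃ₗᵢ[ℝ] V))
    (hρ : Continuous fun gv : G × V => ρ gv.1 gv.2) {H : Subgroup G} {p₀ : V}
    (hp₀ : ∀ g : G, g ∈ H ↔ ρ g p₀ = p₀) {p v : V} (hp : p ∈ fixedSet ρ H) (hv : v ∈ fixedSet ρ H)
    {A : V →L[ℝ] V} (hA : A ∈ lieOf ρ ⊤) :
    ∃ B ∈ lieOf ρ (normalizer (H : Set G)), ⟪v, B p⟫_ℝ = ⟪v, A p⟫_ℝ := by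
  -- `V →L[ℝ] V` is a `NormOneClass` only for nontrivial `V`
  rcases subsingleton_or_nontrivial V with hV | hV
  · exact ⟨A, fun t => ⟨1, one_mem _, fun _ => Subsingleton.elim _ _⟩, rfl⟩
  have : CompactSpace H := isCompact_iff_compactSpace.1 <|
    (Set.ext hp₀ : (H : Set G) = _) ▸ (isClosed_stabilizer ρ hρ p₀).isCompact
  let : MeasurableSpace H := borel H
  have : BorelSpace H := ⟨rfl⟩
  let μ : Measure H := Measure.haarMeasure ⊤
  have : IsProbabilityMeasure μ := ⟨Measure.haarMeasure_self⟩
  let ψ := (operatorRep ρ).comp H.subtype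
  have hψ : Continuous ψ := (continuous_operatorRep ρ hρ).comp continuous_subtype_val
  have hM := isClosed_mrange_operatorRep ρ hρ
  refine ⟨conjAverage μ ψ A, mem_lieOf_normalizer_of_commute ρ hp₀ ?_ ?_, ?_⟩
  · rw [lieOf_top_eq_expLie] at hA ⊢
    refine conjAverage_mem μ hψ (Submonoid.convex_expLie hM) (Submonoid.isClosed_expLie hM)
      fun k => ?_
    exact Submonoid.units_conj_mem_expLie (ψ.toHomUnits k)
      (MonoidHom.mem_mrange.2 ⟨(k : G), rfl⟩) (MonoidHom.mem_mrange.2 ⟨((k⁻¹ : H) : G), rfl⟩)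
      hA
  · exact fun h hh => commute_conjAverage μ hψ A ⟨h, hh⟩
  · refine map_conjAverage μ hψ ((innerSL ℝ v).comp (.apply ℝ V p)) fun k => ?_
    simp only [ψ, MonoidHom.coe_comp, coe_subtype, Function.comp_apply, InvMemClass.coe_inv,
      ContinuousLinearMap.comp_apply, ContinuousLinearMap.apply_apply, mul_apply_eq_comp,
      operatorRep_apply, coe_innerSL_apply, hp _ (inv_mem k.2)]
    conv_lhs => rw [← hv k k.2]
    exact (ρ k).inner_map_map v (A p)

/-- For `p ∈ V^H`, the normal space `σ_p` of the `N`-orbit of `p` inside `V^H`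
(vectors of `V^H` orthogonal to the tangent space `{dρ(Y)p : Y ∈ Lie(N)}`)
coincides with `ν_p ∩ V^H`. -/
theorem sigma_eq_nu_inter_fixed
    {V : Type*} [NormedAddCommGroup V] [InnerProductSpace ℝ V] [FiniteDimensional ℝ V]
    {G : Type*} [Group G] [TopologicalSpace G] [IsTopologicalGroup G] [CompactSpace G]
    (ρ : G →* (V ≃ₗᵢ[ℝ] V)) (hρ : Continuous fun gv : G × V => ρ gv.1 gv.2)
    (H : Subgroup G) (hH : IsPrincipalIsotropy ρ H)
    (p : V) (hp : p ∈ fixedSet ρ H) :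
    {v : V | v ∈ fixedSet ρ H ∧ ∀ A ∈ lieOf ρ (Subgroup.normalizer (H : Set G)), (inner ℝ v (A p) : ℝ) = 0} =
      nuSet ρ p ∩ fixedSet ρ H := by
  ext v
  refine ⟨fun ⟨hv, hvN⟩ => ⟨fun A hA => ?_, hv⟩,
    fun ⟨hvG, hv⟩ => ⟨hv, fun A hA => hvG A (lieOf_mono ρ le_top hA)⟩⟩
  obtain ⟨B, hB, hBA⟩ := exists_mem_lieOf_normalizer_inner_eq ρ hρ hH.1.choose_spec hp hv hA
  rw [← hBA]
  exact hvN B hB
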